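/- arXiv:2110.13401 — 4 statements merged into one kernel-verified Lean document; each statement's English description precedes it below -/
import Mathlib

section
/- Let 1 < p < ∞, m ≥ 1 and λ ≥ 0 be real numbers. For a, b ∈ ℝ set a_λ := G_λ(a) and b_λ := G_λ(b). Then (a^m − b^m)^{p−1} · (a_λ^m − b_λ^m) ≥ |a_λ^m − b_λ^m|^p, where all powers of real numbers are signed powers. -/
/-- The signed truncator `G_λ(s) = sign(s) · max(|s| − λ, 0)`. -/
noncomputable def Gtrunc (lam s : ℝ) : ℝ := Real.sign s * max (|s| - lam) 0

/-- The signed power `r^β := |r|^(β−1) · r` for a real exponent `β > 0`. -/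
noncomputable def spow (r β : ℝ) : ℝ := |r| ^ (β - 1) * r

lemma spow_of_nonneg {x β : ℝ} (hx : 0 ≤ x) (hβ : 0 < β) : spow x β = x ^ β := by
  rcases eq_or_lt_of_le hx with h | h
  · simp [spow, ← h, Real.zero_rpow hβ.ne']
  · rw [spow, abs_of_pos h, ← Real.rpow_add_one h.ne', sub_add_cancel]

lemma spow_neg (x β : ℝ) : spow (-x) β = - spow x β := by
  simp [spow, mul_comm]

lemma spow_zero' (β : ℝ) : spow 0 β = 0 := by simp [spow]

lemma Gtrunc_neg (lam x : ℝ) : Gtrunc lam (-x) = - Gtrunc lam x := by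
  simp [Gtrunc, Real.sign_neg]

lemma Gtrunc_of_nonneg {lam x : ℝ} (hx : 0 ≤ x) (hlam : 0 ≤ lam) :
    Gtrunc lam x = max (x - lam) 0 := by
  rcases eq_or_lt_of_le hx with h | h
  · rw [← h, Gtrunc, Real.sign_zero, zero_mul,
      max_eq_right (show (0:ℝ) - lam ≤ 0 by linarith)]
  · rw [Gtrunc, Real.sign_of_pos h, abs_of_pos h, one_mul]

lemma Gtrunc_eq_zero {lam x : ℝ} (h : |x| ≤ lam) : Gtrunc lam x = 0 := by
  simp [Gtrunc, max_eq_right (by linarith : |x| - lam ≤ 0)]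

lemma spow_le_spow {β : ℝ} (hβ : 0 < β) {x y : ℝ} (hxy : x ≤ y) :
    spow x β ≤ spow y β := by
  have key : ∀ x y : ℝ, x ≤ y → 0 ≤ x → spow x β ≤ spow y β := by
    intro x y hxy hx
    rw [spow_of_nonneg hx hβ, spow_of_nonneg (hx.trans hxy) hβ]
    exact Real.rpow_le_rpow hx hxy hβ.le
  rcases le_total 0 x with hx | hx
  · exact key x y hxy hx
  · rcases le_total 0 y with hy | hy
    · have h1 := key 0 (-x) (by linarith) le_rfl
      have h2 := key 0 y hy le_rfl
      rw [spow_zero'] at h1 h2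
      have hx' : spow x β = - spow (-x) β := by rw [← spow_neg, neg_neg]
      rw [hx']; linarith
    · have := key (-y) (-x) (by linarith) (by linarith)
      rw [spow_neg, spow_neg] at this
      linarith

lemma Gtrunc_le_Gtrunc {lam : ℝ} (hlam : 0 ≤ lam) {x y : ℝ} (hxy : x ≤ y) :
    Gtrunc lam x ≤ Gtrunc lam y := by
  have key : ∀ x y : ℝ, x ≤ y → 0 ≤ x → Gtrunc lam x ≤ Gtrunc lam y := by
    intro x y hxy hx
    rw [Gtrunc_of_nonneg hx hlam, Gtrunc_of_nonneg (hx.trans hxy) hlam]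
    exact max_le_max (by linarith) le_rfl
  rcases le_total 0 x with hx | hx
  · exact key x y hxy hx
  · rcases le_total 0 y with hy | hy
    · have h1 : Gtrunc lam x ≤ 0 := by
        have hx' : Gtrunc lam x = - Gtrunc lam (-x) := by rw [← Gtrunc_neg, neg_neg]
        have h0 : Gtrunc lam 0 = 0 := by
          rw [Gtrunc_of_nonneg le_rfl hlam, max_eq_right (by linarith : (0:ℝ) - lam ≤ 0)]
        have := key 0 (-x) (by linarith) le_rfl
        rw [h0] at this
        rw [hx']; linarith
      have h2 : 0 ≤ Gtrunc lam y := by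
        rw [Gtrunc_of_nonneg hy hlam]; exact le_max_right _ _
      linarith
    · have := key (-y) (-x) (by linarith) (by linarith)
      rw [Gtrunc_neg, Gtrunc_neg] at this
      linarith

/-- Convexity of `x ↦ x^m` (`m ≥ 1`) on `[0,∞)`: increments over intervals of
fixed length are monotone. -/
lemma key_ineq {m : ℝ} (hm : 1 ≤ m) {u v c : ℝ} (hv : 0 ≤ v) (hvu : v ≤ u) (hc : 0 ≤ c) :
    (v + c) ^ m - v ^ m ≤ (u + c) ^ m - u ^ m := by
  rcases eq_or_lt_of_le hc with h | hc
  · simp [← h]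
  rcases eq_or_lt_of_le hvu with h | hvu
  · simp [h]
  have hu : 0 ≤ u := hv.trans hvu.le
  have hcf := convexOn_rpow hm
  have mem : ∀ z : ℝ, 0 ≤ z → z ∈ Set.Ici (0:ℝ) := fun z hz => hz
  have a1 := hcf.secant_mono_aux1 (mem v hv) (mem (u+c) (by linarith))
    (show v < v + c by linarith) (show v + c < u + c by linarith)
  have a2 := hcf.secant_mono_aux1 (mem v hv) (mem (u+c) (by linarith))
    (show v < u from hvu) (show u < u + c by linarith)
  have hpos : (0:ℝ) < u + c - v := by linarith
  nlinarith [a1, a2, hpos]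

/-- Core monotone-difference inequality, case `-lam ≤ b`. -/
lemma diff_mono_aux {m lam : ℝ} (hm : 1 ≤ m) (hlam : 0 ≤ lam) {a b : ℝ}
    (hab : b ≤ a) (hb : -lam ≤ b) :
    spow (Gtrunc lam a) m - spow (Gtrunc lam b) m ≤ spow a m - spow b m := by
  have hm0 : (0:ℝ) < m := by linarith
  rcases le_total b lam with hbl | hbl
  · -- |b| ≤ lam, so Gtrunc lam b = 0
    have hgb : Gtrunc lam b = 0 := Gtrunc_eq_zero (abs_le.mpr ⟨hb, hbl⟩)
    rw [hgb, spow_zero', sub_zero]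
    rcases le_total a lam with hal | hal
    · have hga : Gtrunc lam a = 0 := Gtrunc_eq_zero (abs_le.mpr ⟨le_trans hb hab, hal⟩)
      rw [hga, spow_zero']
      linarith [spow_le_spow hm0 hab]
    · have hga : Gtrunc lam a = a - lam := by
        rw [Gtrunc_of_nonneg (by linarith) hlam]
        exact max_eq_left (by linarith)
      rw [hga, spow_of_nonneg (by linarith : (0:ℝ) ≤ a - lam) hm0,
        spow_of_nonneg (by linarith : (0:ℝ) ≤ a) hm0]
      have hkey := key_ineq hm (le_refl (0:ℝ)) (by linarith : (0:ℝ) ≤ a - lam) hlam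
      rw [zero_add, Real.zero_rpow hm0.ne', sub_zero, sub_add_cancel] at hkey
      have hbm : spow b m ≤ lam ^ m := by
        have h := spow_le_spow hm0 hbl
        rwa [spow_of_nonneg hlam hm0] at h
      linarith
  · -- lam ≤ b ≤ a
    have hga : Gtrunc lam a = a - lam := by
      rw [Gtrunc_of_nonneg (by linarith) hlam]; exact max_eq_left (by linarith)
    have hgb : Gtrunc lam b = b - lam := by
      rw [Gtrunc_of_nonneg (by linarith) hlam]; exact max_eq_left (by linarith)
    rw [hga, hgb, spow_of_nonneg (by linarith : (0:ℝ) ≤ a - lam) hm0,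
      spow_of_nonneg (by linarith : (0:ℝ) ≤ b - lam) hm0,
      spow_of_nonneg (by linarith : (0:ℝ) ≤ a) hm0,
      spow_of_nonneg (by linarith : (0:ℝ) ≤ b) hm0]
    have hkey := key_ineq hm (by linarith : (0:ℝ) ≤ b - lam)
      (by linarith : b - lam ≤ a - lam) hlam
    rw [sub_add_cancel, sub_add_cancel] at hkey
    linarith

lemma diff_mono {m lam : ℝ} (hm : 1 ≤ m) (hlam : 0 ≤ lam) {a b : ℝ} (hab : b ≤ a) :
    spow (Gtrunc lam a) m - spow (Gtrunc lam b) m ≤ spow a m - spow b m := by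
  have hm0 : (0:ℝ) < m := by linarith
  rcases le_total (-lam) b with hb | hb
  · exact diff_mono_aux hm hlam hab hb
  rcases le_total a lam with hal | hal
  · have := diff_mono_aux hm hlam (by linarith : -a ≤ -b) (by linarith)
    rw [Gtrunc_neg, Gtrunc_neg, spow_neg, spow_neg, spow_neg, spow_neg] at this
    linarith
  · -- b ≤ -lam and lam ≤ a
    have hga : Gtrunc lam a = a - lam := by
      rw [Gtrunc_of_nonneg (by linarith) hlam]; exact max_eq_left (by linarith)
    have hgb : Gtrunc lam b = b + lam := by
      have h1 : Gtrunc lam (-b) = -b - lam := by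
        rw [Gtrunc_of_nonneg (by linarith) hlam]; exact max_eq_left (by linarith)
      have h2 := Gtrunc_neg lam b
      rw [h1] at h2; linarith
    rw [hga, hgb, spow_of_nonneg (by linarith : (0:ℝ) ≤ a - lam) hm0,
      spow_of_nonneg (by linarith : (0:ℝ) ≤ a) hm0,
      show spow (b + lam) m = - spow (-(b+lam)) m by rw [spow_neg, neg_neg],
      show spow b m = - spow (-b) m by rw [spow_neg, neg_neg],
      spow_of_nonneg (by linarith : (0:ℝ) ≤ -(b+lam)) hm0,
      spow_of_nonneg (by linarith : (0:ℝ) ≤ -b) hm0]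
    have h1 : (a - lam) ^ m ≤ a ^ m :=
      Real.rpow_le_rpow (by linarith) (by linarith) hm0.le
    have h2 : (-(b + lam)) ^ m ≤ (-b) ^ m :=
      Real.rpow_le_rpow (by linarith) (by linarith) hm0.le
    linarith

lemma stmt3_main (p m lam : ℝ) (hp : 1 < p) (hm : 1 ≤ m) (hlam : 0 ≤ lam) (a b : ℝ)
    (hab : b ≤ a) :
    spow (spow a m - spow b m) (p - 1) * (spow (Gtrunc lam a) m - spow (Gtrunc lam b) m)
      ≥ |spow (Gtrunc lam a) m - spow (Gtrunc lam b) m| ^ p := by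
  have hm0 : (0:ℝ) < m := by linarith
  set D := spow a m - spow b m with hD
  set D' := spow (Gtrunc lam a) m - spow (Gtrunc lam b) m with hD'
  have hD0 : 0 ≤ D := sub_nonneg.mpr (spow_le_spow hm0 hab)
  have hD'0 : 0 ≤ D' :=
    sub_nonneg.mpr (spow_le_spow hm0 (Gtrunc_le_Gtrunc hlam hab))
  have hDD' : D' ≤ D := diff_mono hm hlam hab
  rw [spow_of_nonneg hD0 (by linarith : (0:ℝ) < p - 1), abs_of_nonneg hD'0]
  have hrw : D' ^ p = D' ^ (p - 1) * D' := by
    have h := Real.rpow_add' hD'0 (show p - 1 + 1 ≠ 0 by intro h; linarith)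
    rw [Real.rpow_one, sub_add_cancel] at h
    exact h
  rw [hrw]
  exact mul_le_mul_of_nonneg_right
    (Real.rpow_le_rpow hD'0 hDD' (by linarith)) hD'0

/-- **Lemma 5.1**: for `1 < p < ∞`, `m ≥ 1` and `λ ≥ 0`, with `a_λ = G_λ(a)`,
`b_λ = G_λ(b)`, one has `(a^m − b^m)^(p−1) · (a_λ^m − b_λ^m) ≥ |a_λ^m − b_λ^m|^p`,
all powers of reals being signed powers. -/
theorem stmt3 (p m lam : ℝ) (hp : 1 < p) (hm : 1 ≤ m) (hlam : 0 ≤ lam) (a b : ℝ) :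
    spow (spow a m - spow b m) (p - 1) * (spow (Gtrunc lam a) m - spow (Gtrunc lam b) m)
      ≥ |spow (Gtrunc lam a) m - spow (Gtrunc lam b) m| ^ p := by
  rcases le_total b a with hab | hab
  · exact stmt3_main p m lam hp hm hlam a b hab
  · have := stmt3_main p m lam hp hm hlam b a hab
    have e1 : spow a m - spow b m = -(spow b m - spow a m) := by ring
    have e2 : spow (Gtrunc lam a) m - spow (Gtrunc lam b) m
        = -(spow (Gtrunc lam b) m - spow (Gtrunc lam a) m) := by ring
    rw [e1, e2, spow_neg, abs_neg]
    calc |spow (Gtrunc lam b) m - spow (Gtrunc lam a) m| ^ p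
        ≤ spow (spow b m - spow a m) (p - 1) *
            (spow (Gtrunc lam b) m - spow (Gtrunc lam a) m) := this
      _ = -spow (spow b m - spow a m) (p - 1) *
            -(spow (Gtrunc lam b) m - spow (Gtrunc lam a) m) := by ring
end

section
/- Let d ≥ 1 be an integer, 1 ≤ p < ∞ and 0 < s < 1 real numbers, let u, û : ℝ^d → ℝ be measurable, and let q : ℝ → ℝ be a differentiable function with q(0) = 0 and 0 ≤ q′(t) ≤ 1 for all t ∈ ℝ. Set w := û − u, v₁ := û − q∘w and v₂ := u + q∘w. Then, as integrals with values in [0,∞], ∫_{ℝ^d}∫_{ℝ^d} |v₁(x)−v₁(y)|^p/|x−y|^{d+sp} dx dy + ∫_{ℝ^d}∫_{ℝ^d} |v₂(x)−v₂(y)|^p/|x−y|^{d+sp} dx dy ≤ ∫_{ℝ^d}∫_{ℝ^d} |u(x)−u(y)|^p/|x−y|^{d+sp} dx dy + ∫_{ℝ^d}∫_{ℝ^d} |û(x)−û(y)|^p/|x−y|^{d+sp} dx dy. -/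
open MeasureTheory

/-- The `p`-th power of the `s`-Gagliardo seminorm,
`[v]_{s,p}^p = ∫∫ |v(x)−v(y)|^p / |x−y|^(d+sp) dx dy`, as an `ℝ≥0∞`-valued
double Lebesgue integral. -/
noncomputable def gEnergy (d : ℕ) (s p : ℝ) (v : EuclideanSpace ℝ (Fin d) → ℝ) : ENNReal :=
  ∫⁻ x, ∫⁻ y, ENNReal.ofReal (|v x - v y| ^ p / ‖x - y‖ ^ ((d : ℝ) + s * p))

/-!
Fix `x, y` and put `a = u x − u y`, `b = û x − û y`. By the mean value theorem
`q (w x) − q (w y) = θ (b − a)` for some `θ ∈ [0, 1]`, so the increments of `v₁` and `v₂` are the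
convex combinations `(1 − θ) b + θ a` and `(1 − θ) a + θ b`, and convexity of `t ↦ |t|^p` bounds
the sum of their `p`-th powers by `|a|^p + |b|^p`. Integrating against the kernel gives the claim:
lower Lebesgue integrals are always superadditive, and the integral of a sum splits as soon as one
summand is measurable.
-/

open Set

section Convexity

variable {E : Type*} [NormedAddCommGroup E] [NormedSpace ℝ E] {p : ℝ}

theorem convexOn_univ_norm_rpow (hp : 1 ≤ p) : ConvexOn ℝ univ fun x : E => ‖x‖ ^ p := by
  refine ⟨convex_univ, fun x _ y _ a b ha hb hab => ?_⟩
  have htri : ‖a • x + b • y‖ ≤ a * ‖x‖ + b * ‖y‖ :=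
    (norm_add_le _ _).trans_eq (by rw [norm_smul_of_nonneg ha, norm_smul_of_nonneg hb])
  calc ‖a • x + b • y‖ ^ p ≤ (a * ‖x‖ + b * ‖y‖) ^ p :=
        Real.rpow_le_rpow (norm_nonneg _) htri (by linarith)
    _ ≤ a * ‖x‖ ^ p + b * ‖y‖ ^ p :=
        (convexOn_rpow hp).2 (norm_nonneg x) (norm_nonneg y) ha hb hab

theorem norm_sub_smul_rpow_add_norm_add_smul_rpow_le (hp : 1 ≤ p) (a b : E) {θ : ℝ}
    (hθ : θ ∈ Icc (0 : ℝ) 1) :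
    ‖b - θ • (b - a)‖ ^ p + ‖a + θ • (b - a)‖ ^ p ≤ ‖a‖ ^ p + ‖b‖ ^ p := by
  have hconv : ∀ x y : E, ‖(1 - θ) • x + θ • y‖ ^ p ≤ (1 - θ) * ‖x‖ ^ p + θ * ‖y‖ ^ p :=
    fun x y => (convexOn_univ_norm_rpow hp).2 (mem_univ x) (mem_univ y)
      (sub_nonneg.2 hθ.2) hθ.1 (sub_add_cancel 1 θ)
  have h₁ : b - θ • (b - a) = (1 - θ) • b + θ • a := by module
  have h₂ : a + θ • (b - a) = (1 - θ) • a + θ • b := by module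
  rw [h₁, h₂]
  linarith [hconv b a, hconv a b]

end Convexity

theorem exists_mem_Icc_sub_eq_mul_sub {q : ℝ → ℝ} (hq : Differentiable ℝ q)
    (hq' : ∀ t, deriv q t ∈ Icc (0 : ℝ) 1) (r r' : ℝ) :
    ∃ θ ∈ Icc (0 : ℝ) 1, q r - q r' = θ * (r - r') := by
  wlog h : r' < r generalizing r r'
  · rcases (not_lt.1 h).eq_or_lt with rfl | h'
    · exact ⟨0, ⟨le_rfl, zero_le_one⟩, by ring⟩
    · obtain ⟨θ, hθ, e⟩ := this r' r h'
      exact ⟨θ, hθ, by linear_combination -e⟩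
  obtain ⟨c, -, hc⟩ := exists_deriv_eq_slope q h hq.continuous.continuousOn hq.differentiableOn
  exact ⟨deriv q c, hq' c, by rw [hc, div_mul_cancel₀ _ (sub_ne_zero.2 h.ne')]⟩

theorem abs_sub_rpow_add_abs_sub_rpow_le {α : Type*} {q : ℝ → ℝ} (hq : Differentiable ℝ q)
    (hq' : ∀ t, deriv q t ∈ Icc (0 : ℝ) 1) {p : ℝ} (hp : 1 ≤ p) (u uh : α → ℝ) (x y : α) :
    |(uh x - q (uh x - u x)) - (uh y - q (uh y - u y))| ^ p
        + |(u x + q (uh x - u x)) - (u y + q (uh y - u y))| ^ p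
      ≤ |u x - u y| ^ p + |uh x - uh y| ^ p := by
  obtain ⟨θ, hθ, hmvt⟩ := exists_mem_Icc_sub_eq_mul_sub hq hq' (uh x - u x) (uh y - u y)
  have h₁ : (uh x - q (uh x - u x)) - (uh y - q (uh y - u y))
      = (uh x - uh y) - θ • ((uh x - uh y) - (u x - u y)) := by
    rw [smul_eq_mul]; linear_combination -hmvt
  have h₂ : (u x + q (uh x - u x)) - (u y + q (uh y - u y))
      = (u x - u y) + θ • ((uh x - uh y) - (u x - u y)) := by
    rw [smul_eq_mul]; linear_combination hmvt
  simpa only [h₁, h₂, Real.norm_eq_abs] using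
    norm_sub_smul_rpow_add_norm_add_smul_rpow_le hp (u x - u y) (uh x - uh y) hθ

section DoubleIntegral

variable {α β : Type*} [MeasurableSpace α] [MeasurableSpace β] {μ : Measure α} {ν : Measure β}

theorem lintegral_lintegral_add_le (f g : α → β → ENNReal) :
    (∫⁻ x, ∫⁻ y, f x y ∂ν ∂μ) + ∫⁻ x, ∫⁻ y, g x y ∂ν ∂μ ≤ ∫⁻ x, ∫⁻ y, f x y + g x y ∂ν ∂μ :=
  (le_lintegral_add _ _).trans (lintegral_mono fun _ => le_lintegral_add _ _)

theorem lintegral_lintegral_add_left [SFinite ν] {f : α → β → ENNReal}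
    (hf : Measurable (Function.uncurry f)) (g : α → β → ENNReal) :
    ∫⁻ x, ∫⁻ y, f x y + g x y ∂ν ∂μ = (∫⁻ x, ∫⁻ y, f x y ∂ν ∂μ) + ∫⁻ x, ∫⁻ y, g x y ∂ν ∂μ := by
  have hinner (x : α) : ∫⁻ y, f x y + g x y ∂ν = ∫⁻ y, f x y ∂ν + ∫⁻ y, g x y ∂ν :=
    lintegral_add_left (hf.comp measurable_prodMk_left) (g x)
  simp_rw [hinner]
  exact lintegral_add_left hf.lintegral_prod_right' _

end DoubleIntegral

theorem measurable_ofReal_abs_sub_rpow_div_norm_sub_rpow {E : Type*} [NormedAddCommGroup E]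
    [MeasurableSpace E] [BorelSpace E] [SecondCountableTopology E] {v : E → ℝ}
    (hv : Measurable v) (p c : ℝ) :
    Measurable (Function.uncurry fun x y : E => ENNReal.ofReal (|v x - v y| ^ p / ‖x - y‖ ^ c)) :=
  ENNReal.measurable_ofReal.comp <|
    (((hv.comp measurable_fst).sub (hv.comp measurable_snd)).abs.pow_const p).div
      ((measurable_fst.sub measurable_snd).norm.pow_const c)

theorem stmt11_general (d : ℕ) (p s : ℝ) (hp : 1 ≤ p)
    (u uh : EuclideanSpace ℝ (Fin d) → ℝ) (hu : Measurable u)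
    (q : ℝ → ℝ) (hq : Differentiable ℝ q)
    (hq' : ∀ t : ℝ, 0 ≤ deriv q t ∧ deriv q t ≤ 1) :
    gEnergy d s p (fun x => uh x - q (uh x - u x)) +
        gEnergy d s p (fun x => u x + q (uh x - u x))
      ≤ gEnergy d s p u + gEnergy d s p uh := by
  set F : (EuclideanSpace ℝ (Fin d) → ℝ) → EuclideanSpace ℝ (Fin d) →
      EuclideanSpace ℝ (Fin d) → ENNReal :=
    fun v x y => ENNReal.ofReal (|v x - v y| ^ p / ‖x - y‖ ^ ((d : ℝ) + s * p))
  have pointwise (x y) : F (fun x => uh x - q (uh x - u x)) x y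
      + F (fun x => u x + q (uh x - u x)) x y ≤ F u x y + F uh x y := by
    simp only [F]
    rw [← ENNReal.ofReal_add (by positivity) (by positivity),
      ← ENNReal.ofReal_add (by positivity) (by positivity), ← add_div, ← add_div]
    exact ENNReal.ofReal_le_ofReal <| div_le_div_of_nonneg_right
      (abs_sub_rpow_add_abs_sub_rpow_le hq hq' hp u uh x y) (by positivity)
  calc _ ≤ ∫⁻ x, ∫⁻ y, F (fun x => uh x - q (uh x - u x)) x y
          + F (fun x => u x + q (uh x - u x)) x y :=
        lintegral_lintegral_add_le _ _
    _ ≤ ∫⁻ x, ∫⁻ y, F u x y + F uh x y :=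
        lintegral_mono fun x => lintegral_mono fun y => pointwise x y
    _ = _ :=
        lintegral_lintegral_add_left (measurable_ofReal_abs_sub_rpow_div_norm_sub_rpow hu _ _) _

/-- Functional inequality from the proof of Corollary 3.2: for measurable
`u, û : ℝ^d → ℝ` and a differentiable `q` with `q(0) = 0`, `0 ≤ q′ ≤ 1`, setting
`w := û − u`, `v₁ := û − q∘w`, `v₂ := u + q∘w`, one has
`[v₁]_{s,p}^p + [v₂]_{s,p}^p ≤ [u]_{s,p}^p + [û]_{s,p}^p`. -/
theorem stmt11 (d : ℕ) (hd : 1 ≤ d) (p s : ℝ) (hp : 1 ≤ p) (hs : s ∈ Set.Ioo (0 : ℝ) 1)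
    (u uh : EuclideanSpace ℝ (Fin d) → ℝ) (hu : Measurable u) (huh : Measurable uh)
    (q : ℝ → ℝ) (hq : Differentiable ℝ q) (hq0 : q 0 = 0)
    (hq' : ∀ t : ℝ, 0 ≤ deriv q t ∧ deriv q t ≤ 1) :
    gEnergy d s p (fun x => uh x - q (uh x - u x)) +
        gEnergy d s p (fun x => u x + q (uh x - u x))
      ≤ gEnergy d s p u + gEnergy d s p uh :=
  stmt11_general d p s hp u uh hu q hq hq'
end

section
/- Let d ≥ 1 be an integer, 1 < p < ∞, 1 < q < ∞ with conjugate exponent q′ = q/(q−1), 0 < s < 1, and M > 0. Let h ∈ L^q(−M,M) and define φ(t) := ∫_0^t h(r) dr for t ∈ [−M,M]. Let ξ : ℝ^d → [−M,M] be measurable. Then, as integrals with values in [0,∞], ∫_{ℝ^d}∫_{ℝ^d} |φ(ξ(x)) − φ(ξ(y))|^p / |x−y|^{d+sp} dy dx ≤ ‖h‖_{L^q(−M,M)}^p · ∫_{ℝ^d}∫_{ℝ^d} |ξ(x)−ξ(y)|^{p/q′} / |x−y|^{d+sp} dy dx. -/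
/-!
Since `φ(ξ x) - φ(ξ y) = ∫_{ξ y}^{ξ x} h`, Hölder's inequality against the constant `1 ∈ L^{q'}`
shows that `φ` is `1/q'`-Hölder on `[-M, M]` with constant `‖h‖_{L^q(-M,M)}`. Raising this to the
power `p` bounds the integrand of the left-hand side pointwise by `‖h‖^p` times that of the right.
-/

open MeasureTheory Set

theorem abs_intervalIntegral_le_of_memLp {q q' : ℝ} (hqq' : q.HolderConjugate q') {S : Set ℝ}
    {h : ℝ → ℝ} (hh : MemLp h (ENNReal.ofReal q) (volume.restrict S)) {a b : ℝ}
    (hab : uIcc a b ⊆ S) :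
    |∫ r in a..b, h r| ≤ (∫ r in S, |h r| ^ q) ^ (1 / q) * |b - a| ^ (1 / q') := by
  have hS : uIoc a b ⊆ S := uIoc_subset_uIcc.trans hab
  have : IsFiniteMeasure (volume.restrict (uIoc a b)) :=
    ⟨by simp [Real.volume_uIoc]⟩
  have hHolder := integral_mul_le_Lp_mul_Lq_of_nonneg hqq'
    (ae_of_all _ fun r => norm_nonneg (h r)) (ae_of_all _ fun _ => zero_le_one)
    (hh.norm.mono_measure (Measure.restrict_mono hS le_rfl)) (memLp_const 1)
  have hIq : IntegrableOn (fun r => |h r| ^ q) S := by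
    simpa [ENNReal.toReal_ofReal hqq'.nonneg, IntegrableOn] using
      hh.integrable_norm_rpow (by simpa using hqq'.pos) ENNReal.ofReal_ne_top
  have hvol : volume.real (uIoc a b) = |b - a| := by
    simp [measureReal_def, Real.volume_uIoc]
  calc |∫ r in a..b, h r| ≤ ∫ r in uIoc a b, ‖h r‖ :=
        intervalIntegral.norm_integral_le_integral_norm_uIoc (f := h)
    _ ≤ (∫ r in uIoc a b, |h r| ^ q) ^ (1 / q) * |b - a| ^ (1 / q') := by
        simpa [hvol] using hHolder
    _ ≤ (∫ r in S, |h r| ^ q) ^ (1 / q) * |b - a| ^ (1 / q') := by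
        gcongr
        · exact hqq'.one_div_nonneg
        · exact ae_of_all _ fun r => by positivity

theorem intervalIntegrable_of_memLp {p : ENNReal} (hp : 1 ≤ p) {S : Set ℝ} {h : ℝ → ℝ}
    (hh : MemLp h p (volume.restrict S)) {a b : ℝ} (hab : uIcc a b ⊆ S) :
    IntervalIntegrable h volume a b :=
  have : IsFiniteMeasure (volume.restrict (uIcc a b)) :=
    isFiniteMeasure_restrict.2 isCompact_uIcc.measure_ne_top
  IntegrableOn.intervalIntegrable
    ((hh.mono_measure (Measure.restrict_mono hab le_rfl)).integrable hp)

theorem abs_intervalIntegral_sub_le_of_memLp {q q' : ℝ} (hqq' : q.HolderConjugate q')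
    {S : Set ℝ} (hS : S.OrdConnected) {h : ℝ → ℝ}
    (hh : MemLp h (ENNReal.ofReal q) (volume.restrict S)) {c a b : ℝ}
    (hc : c ∈ S) (ha : a ∈ S) (hb : b ∈ S) :
    |(∫ r in c..a, h r) - ∫ r in c..b, h r| ≤
      (∫ r in S, |h r| ^ q) ^ (1 / q) * |a - b| ^ (1 / q') := by
  have hq : 1 ≤ ENNReal.ofReal q := ENNReal.one_le_ofReal.mpr hqq'.lt.le
  rw [intervalIntegral.integral_interval_sub_left
    (intervalIntegrable_of_memLp hq hh (hS.uIcc_subset hc ha))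
    (intervalIntegrable_of_memLp hq hh (hS.uIcc_subset hc hb))]
  exact abs_intervalIntegral_le_of_memLp hqq' hh (hS.uIcc_subset hb ha)

theorem lintegral_lintegral_ofReal_le_const_mul {α β : Type*} [MeasurableSpace α]
    [MeasurableSpace β] {μ : Measure α} {ν : Measure β} {F G : α → β → ℝ} {c : ℝ}
    (hc : 0 ≤ c) (hFG : ∀ x y, F x y ≤ c * G x y) :
    ∫⁻ x, ∫⁻ y, ENNReal.ofReal (F x y) ∂ν ∂μ ≤
      ENNReal.ofReal c * ∫⁻ x, ∫⁻ y, ENNReal.ofReal (G x y) ∂ν ∂μ :=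
  calc ∫⁻ x, ∫⁻ y, ENNReal.ofReal (F x y) ∂ν ∂μ
      ≤ ∫⁻ x, ∫⁻ y, ENNReal.ofReal c * ENNReal.ofReal (G x y) ∂ν ∂μ :=
        lintegral_mono fun x => lintegral_mono fun y =>
          (ENNReal.ofReal_le_ofReal (hFG x y)).trans_eq (ENNReal.ofReal_mul hc)
    _ = ENNReal.ofReal c * ∫⁻ x, ∫⁻ y, ENNReal.ofReal (G x y) ∂ν ∂μ := by
        simp_rw [lintegral_const_mul' _ _ ENNReal.ofReal_ne_top]

theorem stmt12_general (d : ℕ) (p q q' s M : ℝ)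
    (hp : 1 < p) (hq : 1 < q) (hq' : q' = q / (q - 1))
    (hM : 0 < M)
    (h : ℝ → ℝ) (hh : MemLp h (ENNReal.ofReal q) (volume.restrict (Set.Icc (-M) M)))
    (ξ : EuclideanSpace ℝ (Fin d) → ℝ)
    (hξM : ∀ x, ξ x ∈ Set.Icc (-M) M) :
    (∫⁻ x, ∫⁻ y, ENNReal.ofReal
        (|(∫ r in (0 : ℝ)..(ξ x), h r) - ∫ r in (0 : ℝ)..(ξ y), h r| ^ p /
          ‖x - y‖ ^ ((d : ℝ) + s * p)))
      ≤ ENNReal.ofReal ((((∫ r in Set.Icc (-M) M, |h r| ^ q)) ^ (1 / q)) ^ p) *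
          ∫⁻ x, ∫⁻ y, ENNReal.ofReal
            (|ξ x - ξ y| ^ (p / q') / ‖x - y‖ ^ ((d : ℝ) + s * p)) := by
  have hqq' : q.HolderConjugate q' := (Real.holderConjugate_iff_eq_conjExponent hq).mpr hq'
  have h0 : (0 : ℝ) ∈ Icc (-M) M := ⟨by linarith, hM.le⟩
  refine lintegral_lintegral_ofReal_le_const_mul (by positivity) fun x y => ?_
  rw [mul_div_assoc']
  gcongr ?_ / _
  calc |(∫ r in (0 : ℝ)..(ξ x), h r) - ∫ r in (0 : ℝ)..(ξ y), h r| ^ p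
      ≤ ((∫ r in Icc (-M) M, |h r| ^ q) ^ (1 / q) * |ξ x - ξ y| ^ (1 / q')) ^ p := by
        gcongr
        exact abs_intervalIntegral_sub_le_of_memLp hqq' ordConnected_Icc hh h0 (hξM x) (hξM y)
    _ = ((∫ r in Icc (-M) M, |h r| ^ q) ^ (1 / q)) ^ p * |ξ x - ξ y| ^ (p / q') := by
        rw [Real.mul_rpow (by positivity) (by positivity), ← Real.rpow_mul (abs_nonneg _),
          one_div_mul_eq_div]

/-- **Composition estimate** from the proof of Theorem 1.1: if `φ(t) = ∫_0^t h`
with `h ∈ L^q(−M,M)` and `ξ : ℝ^d → [−M,M]` is measurable, then the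
`s`-Gagliardo energy of `φ∘ξ` is controlled by
`‖h‖_{L^q(−M,M)}^p · ∫∫ |ξ(x)−ξ(y)|^(p/q′) / |x−y|^(d+sp)`, where
`q′ = q/(q−1)` is the conjugate exponent. -/
theorem stmt12 (d : ℕ) (hd : 1 ≤ d) (p q q' s M : ℝ)
    (hp : 1 < p) (hq : 1 < q) (hq' : q' = q / (q - 1))
    (hs : s ∈ Set.Ioo (0 : ℝ) 1) (hM : 0 < M)
    (h : ℝ → ℝ) (hh : MemLp h (ENNReal.ofReal q) (volume.restrict (Set.Icc (-M) M)))
    (ξ : EuclideanSpace ℝ (Fin d) → ℝ) (hξ : Measurable ξ)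
    (hξM : ∀ x, ξ x ∈ Set.Icc (-M) M) :
    (∫⁻ x, ∫⁻ y, ENNReal.ofReal
        (|(∫ r in (0 : ℝ)..(ξ x), h r) - ∫ r in (0 : ℝ)..(ξ y), h r| ^ p /
          ‖x - y‖ ^ ((d : ℝ) + s * p)))
      ≤ ENNReal.ofReal ((((∫ r in Set.Icc (-M) M, |h r| ^ q)) ^ (1 / q)) ^ p) *
          ∫⁻ x, ∫⁻ y, ENNReal.ofReal
            (|ξ x - ξ y| ^ (p / q') / ‖x - y‖ ^ ((d : ℝ) + s * p)) :=
  stmt12_general d p q q' s M hp hq hq' hM h hh ξ hξM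
end

section
/- Let (Σ,μ) be a σ-finite measure space, 1 < q < ∞, 1 ≤ r ≤ ∞, σ > 0, ω ∈ ℝ, ω′ ≥ 0, λ ≥ 0 and C > 0. Let u, v ∈ L^q_μ, and let F : L^q_μ → L^q_μ satisfy F(0) = 0 and |F(w)(x) − F(ŵ)(x)| ≤ ω′·|w(x) − ŵ(x)| for μ-a.e. x ∈ Σ and all w, ŵ ∈ L^q_μ. If ‖G_λ(u)‖_r^σ ≤ C·∫_Σ |G_λ(u)|^{q−2} G_λ(u) · ( v + ω(G_λ(u) + λ·sign(u)) ) dμ, then ‖G_λ(u)‖_r^σ ≤ C·∫_Σ |G_λ(u)|^{q−2} G_λ(u) · ( v + F(u) + (ω+ω′)(G_λ(u) + λ·sign(u)) ) dμ. -/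
/-!
On the support of `G_λ(u)` one has `G_λ(u) + λ·sign u = u`, so against the weight
`S = |G_λ(u)|^{q-2} G_λ(u)` the term `ω(G_λ(u) + λ·sign u)` is just `ω·S·u`. Since `S` has the
sign of `u`, `S·u = |S|·|u|`, and the Lipschitz bound `|F(u)| ≤ ω′|u|` (from `F(0) = 0`) gives
`S·F(u) + ω′·S·u ≥ 0` pointwise. The right-hand side can therefore only grow; all integrals
exist by Hölder's inequality, as `S ∈ L^{q/(q-1)}`.
-/

open MeasureTheory

lemma Real.measurable_sign : Measurable Real.sign :=
  Measurable.ite (measurableSet_lt measurable_id measurable_const) measurable_const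
    (Measurable.ite (measurableSet_lt measurable_const measurable_id) measurable_const
      measurable_const)

lemma measurable_gtrunc (lam : ℝ) : Measurable (Gtrunc lam) :=
  Real.measurable_sign.mul ((measurable_id.abs.sub measurable_const).max measurable_const)

lemma measurable_spow (β : ℝ) : Measurable (fun a : ℝ => spow a β) :=
  (measurable_id.abs.pow measurable_const).mul measurable_id

lemma abs_gtrunc_le {lam : ℝ} (hlam : 0 ≤ lam) (s : ℝ) : |Gtrunc lam s| ≤ |s| := by
  have hsign : |Real.sign s| ≤ 1 := by
    rcases Real.sign_apply_eq s with h | h | h <;> norm_num [h]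
  have hmax : |max (|s| - lam) 0| ≤ |s| := by
    rw [abs_of_nonneg (le_max_right _ _)]
    exact max_le (by linarith) (abs_nonneg s)
  rw [Gtrunc, abs_mul]
  simpa using mul_le_mul hsign hmax (abs_nonneg _) zero_le_one

lemma gtrunc_add_mul_sign {lam s : ℝ} (h : Gtrunc lam s ≠ 0) :
    Gtrunc lam s + lam * Real.sign s = s := by
  have hs : s ≠ 0 := by rintro rfl; simp [Gtrunc] at h
  have hlt : lam < |s| := by
    by_contra! hle
    exact h (by simp [Gtrunc, max_eq_right (sub_nonpos.2 hle)])
  rw [Gtrunc, max_eq_left (by linarith)]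
  rcases hs.lt_or_gt with hneg | hpos
  · rw [Real.sign_of_neg hneg, abs_of_neg hneg]; ring
  · rw [Real.sign_of_pos hpos, abs_of_pos hpos]; ring

lemma gtrunc_mul_self_nonneg (lam s : ℝ) : 0 ≤ Gtrunc lam s * s := by
  rw [Gtrunc, mul_right_comm]
  exact mul_nonneg (Real.sign_mul_nonneg s) (le_max_right _ _)

lemma abs_spow (a : ℝ) {β : ℝ} (hβ : 0 < β) : |spow a β| = |a| ^ β := by
  rcases eq_or_ne a 0 with rfl | ha
  · simp [spow, Real.zero_rpow hβ.ne']
  · rw [spow, abs_mul, abs_of_nonneg (Real.rpow_nonneg (abs_nonneg a) _),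
      ← Real.rpow_add_one (abs_ne_zero.2 ha), sub_add_cancel]

lemma spow_mul_nonneg {a s : ℝ} (β : ℝ) (h : 0 ≤ a * s) : 0 ≤ spow a β * s := by
  rw [spow, mul_assoc]
  exact mul_nonneg (Real.rpow_nonneg (abs_nonneg a) _) h

lemma spow_gtrunc_mul_gtrunc_add_mul_sign (lam β s : ℝ) :
    spow (Gtrunc lam s) β * (Gtrunc lam s + lam * Real.sign s) = spow (Gtrunc lam s) β * s := by
  by_cases h : Gtrunc lam s = 0
  · simp [spow, h]
  · rw [gtrunc_add_mul_sign h]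

lemma neg_mul_mul_le_mul_of_abs_le {S f s c : ℝ} (hSs : 0 ≤ S * s) (hf : |f| ≤ c * |s|) :
    -(c * (S * s)) ≤ S * f := by
  have hSs' : S * s = |S| * |s| := by rw [← abs_mul, abs_of_nonneg hSs]
  calc -(c * (S * s)) = -(|S| * (c * |s|)) := by rw [hSs']; ring
    _ ≤ -(|S| * |f|) := neg_le_neg (mul_le_mul_of_nonneg_left hf (abs_nonneg S))
    _ = -|S * f| := by rw [abs_mul]
    _ ≤ S * f := neg_abs_le _

section Lp

variable {X : Type*} [MeasurableSpace X] {μ : Measure X}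

lemma MeasureTheory.MemLp.gtrunc {lam : ℝ} (hlam : 0 ≤ lam) {p : ENNReal} {u : X → ℝ} (hu : MemLp u p μ) :
    MemLp (fun x => Gtrunc lam (u x)) p μ :=
  hu.of_le ((measurable_gtrunc lam).comp_aemeasurable hu.1.aemeasurable).aestronglyMeasurable
    (Filter.Eventually.of_forall fun x => by simpa using abs_gtrunc_le hlam (u x))

lemma MeasureTheory.MemLp.spow {q β : ℝ} (hβ : 0 < β) {f : X → ℝ} (hf : MemLp f (ENNReal.ofReal q) μ) :
    MemLp (fun x => spow (f x) β) (ENNReal.ofReal (q / β)) μ := by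
  have h := hf.norm_rpow_div (ENNReal.ofReal β)
  rw [ENNReal.toReal_ofReal hβ.le, ← ENNReal.ofReal_div_of_pos hβ] at h
  refine h.congr_norm
    ((measurable_spow β).comp_aemeasurable hf.1.aemeasurable).aestronglyMeasurable
    (Filter.Eventually.of_forall fun x => ?_)
  simp only [Real.norm_eq_abs, abs_spow _ hβ]
  exact abs_of_nonneg (Real.rpow_nonneg (abs_nonneg _) _)

lemma integrable_spow_mul {q : ℝ} (hq : 1 < q) {f g : X → ℝ}
    (hf : MemLp f (ENNReal.ofReal q) μ) (hg : MemLp g (ENNReal.ofReal q) μ) :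
    Integrable (fun x => spow (f x) (q - 1) * g x) μ :=
  have : ENNReal.HolderConjugate (ENNReal.ofReal (q / (q - 1))) (ENNReal.ofReal q) :=
    (Real.HolderConjugate.conjExponent hq).symm.ennrealOfReal
  (hf.spow (sub_pos.2 hq)).integrable_mul hg

lemma integral_spow_gtrunc_mul_le {q : ℝ} (hq : 1 < q) {lam : ℝ} (hlam : 0 ≤ lam)
    {u v w : X → ℝ} (hu : MemLp u (ENNReal.ofReal q) μ) (hv : MemLp v (ENNReal.ofReal q) μ)
    (hw : MemLp w (ENNReal.ofReal q) μ) {c : ℝ} (hwu : ∀ᵐ x ∂μ, |w x| ≤ c * |u x|) (ω : ℝ) :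
    ∫ x, spow (Gtrunc lam (u x)) (q - 1) *
        (v x + ω * (Gtrunc lam (u x) + lam * Real.sign (u x))) ∂μ ≤
      ∫ x, spow (Gtrunc lam (u x)) (q - 1) *
        (v x + w x + (ω + c) * (Gtrunc lam (u x) + lam * Real.sign (u x))) ∂μ := by
  set S := fun x => spow (Gtrunc lam (u x)) (q - 1)
  have hSu x := spow_gtrunc_mul_gtrunc_add_mul_sign lam (q - 1) (u x)
  have hint {g : X → ℝ} (hg : MemLp g (ENNReal.ofReal q) μ) : Integrable (fun x => S x * g x) μ :=
    integrable_spow_mul hq (hu.gtrunc hlam) hg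
  calc _ = ∫ x, S x * v x + ω * (S x * u x) ∂μ :=
        integral_congr_ae (Filter.Eventually.of_forall fun x => by
          linear_combination ω * hSu x)
    _ ≤ ∫ x, S x * v x + ω * (S x * u x) + (S x * w x + c * (S x * u x)) ∂μ := by
        have hold := (hint hv).add ((hint hu).const_mul ω)
        refine integral_mono_ae hold (hold.add ((hint hw).add ((hint hu).const_mul c))) ?_
        filter_upwards [hwu] with x hx
        have hSu_nonneg := spow_mul_nonneg (q - 1) (gtrunc_mul_self_nonneg lam (u x))
        linarith [neg_mul_mul_le_mul_of_abs_le hSu_nonneg hx]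
    _ = _ := integral_congr_ae (Filter.Eventually.of_forall fun x => by
          linear_combination -(ω + c) * hSu x)

end Lp

theorem stmt16_general {X : Type*} [MeasurableSpace X] (μ : Measure X)
    (q : ℝ) (hq : 1 < q) (r : ENNReal)
    (σ ω ω' lam C : ℝ) (hlam : 0 ≤ lam) (hC : 0 < C)
    (u v : X → ℝ)
    (hu : MemLp u (ENNReal.ofReal q) μ) (hv : MemLp v (ENNReal.ofReal q) μ)
    (F : (X → ℝ) → (X → ℝ))
    (hF0 : F (fun _ => 0) = fun _ => 0)
    (hFmap : ∀ w, MemLp w (ENNReal.ofReal q) μ → MemLp (F w) (ENNReal.ofReal q) μ)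
    (hFlip : ∀ w wh : X → ℝ, ∀ᵐ x ∂μ, |F w x - F wh x| ≤ ω' * |w x - wh x|)
    (hyp : eLpNorm (fun x => Gtrunc lam (u x)) r μ ^ σ ≤
        ENNReal.ofReal (C * ∫ x, spow (Gtrunc lam (u x)) (q - 1) *
          (v x + ω * (Gtrunc lam (u x) + lam * Real.sign (u x))) ∂μ)) :
    eLpNorm (fun x => Gtrunc lam (u x)) r μ ^ σ ≤
      ENNReal.ofReal (C * ∫ x, spow (Gtrunc lam (u x)) (q - 1) *
        (v x + F u x + (ω + ω') * (Gtrunc lam (u x) + lam * Real.sign (u x))) ∂μ) := by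
  have hFu : ∀ᵐ x ∂μ, |F u x| ≤ ω' * |u x| := by
    filter_upwards [hFlip u fun _ => 0] with x hx
    simpa [hF0] using hx
  refine hyp.trans (ENNReal.ofReal_le_ofReal (mul_le_mul_of_nonneg_left ?_ hC.le))
  exact integral_spow_gtrunc_mul_le hq hlam hu hv (hFmap u hu) hFu ω

/-- **Lemma 3.7**: the one-parameter Sobolev-type inequality
`‖G_λ(u)‖_r^σ ≤ C·[G_λ(u), v + ω(G_λ(u)+λ·sign u)]_q` is stable under adding a
pointwise `ω′`-Lipschitz perturbation `F` with `F(0) = 0`, at the cost of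
replacing `ω` by `ω + ω′`. -/
theorem stmt16 {X : Type*} [MeasurableSpace X] (μ : Measure X) [SigmaFinite μ]
    (q : ℝ) (hq : 1 < q) (r : ENNReal) (hr : 1 ≤ r)
    (σ ω ω' lam C : ℝ) (hσ : 0 < σ) (hω' : 0 ≤ ω') (hlam : 0 ≤ lam) (hC : 0 < C)
    (u v : X → ℝ)
    (hu : MemLp u (ENNReal.ofReal q) μ) (hv : MemLp v (ENNReal.ofReal q) μ)
    (F : (X → ℝ) → (X → ℝ))
    (hF0 : F (fun _ => 0) = fun _ => 0)
    (hFmap : ∀ w, MemLp w (ENNReal.ofReal q) μ → MemLp (F w) (ENNReal.ofReal q) μ)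
    (hFlip : ∀ w wh : X → ℝ, ∀ᵐ x ∂μ, |F w x - F wh x| ≤ ω' * |w x - wh x|)
    (hyp : eLpNorm (fun x => Gtrunc lam (u x)) r μ ^ σ ≤
        ENNReal.ofReal (C * ∫ x, spow (Gtrunc lam (u x)) (q - 1) *
          (v x + ω * (Gtrunc lam (u x) + lam * Real.sign (u x))) ∂μ)) :
    eLpNorm (fun x => Gtrunc lam (u x)) r μ ^ σ ≤
      ENNReal.ofReal (C * ∫ x, spow (Gtrunc lam (u x)) (q - 1) *
        (v x + F u x + (ω + ω') * (Gtrunc lam (u x) + lam * Real.sign (u x))) ∂μ) :=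
  stmt16_general μ q hq r σ ω ω' lam C hlam hC u v hu hv F hF0 hFmap hFlip hyp
end
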